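/- Let v_L > 0, y_L < 0, y_L² > 4v_L, let λ₁(U_L) = (−y_L − √(y_L²−4v_L))/(2v_L²) and λ₂(U_L) = (−y_L + √(y_L²−4v_L))/(2v_L²), and let s satisfy 0 < s < λ₁(U_L). Set W_L = (w₁, w₂) = (y_L/v_L − s·v_L, 1/v_L − s·y_L), and fix E with v_L·λ₁(U_L) < E < v_L·λ₂(U_L). Define φ₁(v) = y_L − E(v − v_L) and φ₂(v) = (1/s)(1/v − 1/v_L) + y_L, and let R = {(v, y) : 0 < v ≤ v_L and (y − φ₁(v))(y − φ₂(v)) ≤ 0} (the curvilinear region to the left of U_L = (v_L, y_L) bounded by the two curves, both of which pass through U_L). Then R is negatively invariant for the planar ODE v′ = y/v − s·v − w₁, y′ = 1/v − s·y − w₂: for every solution (v, y) : [t₀, t₁] → {v > 0} of this ODE with (v(t₁), y(t₁)) ∈ R, one has (v(t), y(t)) ∈ R for all t ∈ [t₀, t₁]. -/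

import Mathlib

/-!
Write `A = vL - v`, `B = y - φ₁ v`, `C = φ₂ v - y`. For `0 < v ≤ vL` one has
`B + C = (vL - v) (1 / (s v vL) - E) ≥ 0`, so `R` is exactly the set where `A, B, C ≥ 0`.
Along solutions the triple `(A, B, C)` satisfies a linear system whose couplings have the sign
that makes the nonnegative orthant invariant backward in time: at a point where one barrier is
the smallest and negative, its derivative is at most a bounded multiple of its absolute value.
The signs come from the quadratic `P x = vL x² + yL x + 1`, whose roots are `vL λ₁ < vL λ₂`:
`P E < 0` because `vL λ₁ < E < vL λ₂`, and `P (s v) > 0` for `0 < v ≤ vL` because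
`s vL < vL λ₁`.
If `M` bounds those multiples, a last-exit argument applied to the barriers plus
`ε e^{(M+1)(t₁-t)}` gives the invariance.
-/

/-- First characteristic speed. -/
noncomputable def lam1 (v y : ℝ) : ℝ := (-y - Real.sqrt (y ^ 2 - 4 * v)) / (2 * v ^ 2)

/-- Second characteristic speed. -/
noncomputable def lam2 (v y : ℝ) : ℝ := (-y + Real.sqrt (y ^ 2 - 4 * v)) / (2 * v ^ 2)

open Set Topology

section Orthant

variable {ι : Type*} [Finite ι] {X X' : ι → ℝ → ℝ} {a b : ℝ}

theorem forall_pos_of_deriv_right_neg_boundary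
    (hX : ∀ i, ContinuousOn (X i) (Icc a b))
    (hX' : ∀ i, ∀ t ∈ Ico a b, HasDerivWithinAt (X i) (X' i t) (Ici t) t)
    (hbd : ∀ t ∈ Ico a b, ∀ i, X i t = 0 → (∀ j, 0 ≤ X j t) → X' i t < 0)
    (hb : ∀ i, 0 < X i b) :
    ∀ t ∈ Icc a b, ∀ i, 0 < X i t := by
  by_contra! ⟨t, ht, i, hti⟩
  set S := ⋃ j, Icc a b ∩ X j ⁻¹' Iic 0
  have hS : IsCompact S := isCompact_Icc.of_isClosed_subset
    (isClosed_iUnion_of_finite fun j => (hX j).preimage_isClosed_of_isClosed isClosed_Icc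
      isClosed_Iic) (iUnion_subset fun _ => inter_subset_left)
  obtain ⟨σ, hσS, hσlast⟩ := hS.exists_isGreatest ⟨t, mem_iUnion.2 ⟨i, ht, hti⟩⟩
  obtain ⟨k, hσ, hkσ⟩ := mem_iUnion.1 hσS
  have hσb : σ < b := hσ.2.lt_of_ne (by rintro rfl; exact (hb k).not_ge hkσ)
  have hσ' : σ ∈ Ico a b := ⟨hσ.1, hσb⟩
  have hafter : ∀ᶠ u in 𝓝[>] σ, ∀ j, 0 < X j u := by
    filter_upwards [Ioc_mem_nhdsGT hσb] with u hu j
    by_contra! hju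
    exact hu.1.not_ge (hσlast (mem_iUnion.2 ⟨j, ⟨hσ.1.trans hu.1.le, hu.2⟩, hju⟩))
  have hσ0 : ∀ j, 0 ≤ X j σ := fun j =>
    ge_of_tendsto ((hX' j σ hσ').continuousWithinAt.mono Ioi_subset_Ici_self)
      (hafter.mono fun u hu => (hu j).le)
  have hkσ0 : X k σ = 0 := hkσ.antisymm (hσ0 k)
  have hslope :=
    (hX' k σ hσ').Ioi_of_Ici.limsup_slope_le' (lt_irrefl σ) (hbd σ hσ' k hkσ0 hσ0)
  obtain ⟨u, hu, hku, hσu⟩ := (hslope.and (hafter.and self_mem_nhdsWithin)).exists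
  rw [slope_def_field, hkσ0, sub_zero] at hu
  exact (div_pos (hku k) (sub_pos.2 hσu)).not_gt hu

theorem forall_nonneg_of_deriv_right_le_boundary (M : ℝ)
    (hX : ∀ i, ContinuousOn (X i) (Icc a b))
    (hX' : ∀ i, ∀ t ∈ Ico a b, HasDerivWithinAt (X i) (X' i t) (Ici t) t)
    (hbd : ∀ t ∈ Ico a b, ∀ i, X i t < 0 → (∀ j, X i t ≤ X j t) →
      X' i t ≤ M * -X i t)
    (hb : ∀ i, 0 ≤ X i b) :
    ∀ t ∈ Icc a b, ∀ i, 0 ≤ X i t := by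
  intro t ht i
  -- adding `ε e^{(M+1)(b-u)}` turns the non-strict boundary condition into a strict one
  set φ : ℝ → ℝ := fun u => Real.exp ((M + 1) * (b - u))
  have hφ : ∀ u, HasDerivAt φ (-(M + 1) * φ u) u := fun u => by
    simpa [φ, mul_comm] using (((hasDerivAt_id u).const_sub b).const_mul (M + 1)).exp
  have hpert : ∀ ε > 0, 0 < X i t + ε * φ t := by
    intro ε hε
    refine forall_pos_of_deriv_right_neg_boundary (X := fun j u => X j u + ε * φ u)
      (X' := fun j u => X' j u + ε * (-(M + 1) * φ u))
      (fun j => (hX j).add (continuousOn_const.mul (by fun_prop)))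
      (fun j u hu => (hX' j u hu).add ((hφ u).const_mul ε).hasDerivWithinAt)
      (fun u hu j hj hall => ?_) (fun j => add_pos_of_nonneg_of_pos (hb j) (by positivity))
      t ht i
    have hεφ : 0 < ε * φ u := by positivity
    have hXj : -X j u = ε * φ u := by linarith
    have := hbd u hu j (by linarith) (fun k => by linarith [hall k])
    rw [hXj] at this
    linarith
  refine le_of_forall_pos_lt_add fun δ hδ => ?_
  have := hpert (δ / φ t) (by positivity)
  rwa [div_mul_cancel₀ _ (Real.exp_pos _).ne'] at this

end Orthant

noncomputable section

namespace LayerODE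

-- `charQuad vL yL (vL * λ) = vL³ det (λ - DF(U_L))`, so the roots of `charQuad vL yL` are
-- `vL * lam1 vL yL` and `vL * lam2 vL yL`.
def charQuad (vL yL x : ℝ) : ℝ := vL * x ^ 2 + yL * x + 1

def φ₁ (vL yL E v : ℝ) : ℝ := yL - E * (v - vL)

-- the nullcline `y′ = 0` of the layer field
def φ₂ (vL yL s v : ℝ) : ℝ := 1 / s * (1 / v - 1 / vL) + yL

-- the layer field `F(U) - sU - W_L`, with `W_L` substituted
def fieldV (vL yL s v y : ℝ) : ℝ := y / v - s * v - (yL / vL - s * vL)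

def fieldY (vL yL s v y : ℝ) : ℝ := 1 / v - s * y - (1 / vL - s * yL)

def barriers (vL yL s E v y : ℝ) : Fin 3 → ℝ :=
  ![vL - v, y - φ₁ vL yL E v, φ₂ vL yL s v - y]

def barriersDeriv (s E v v' y' : ℝ) : Fin 3 → ℝ :=
  ![-v', y' + E * v', -(v' / (s * v ^ 2)) - y']

def rowRate (vL yL s E v : ℝ) : Fin 3 → ℝ :=
  ![1 / v + (E * vL + yL) / (vL * v) + s,
    s - E / v - charQuad vL yL E / (v * vL),
    |charQuad vL yL (s * v) / (s ^ 2 * v ^ 4 * vL)| + s - 1 / (s * v ^ 3)]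

def rate (vL yL s E v : ℝ) : ℝ :=
  max (max (rowRate vL yL s E v 0) (rowRate vL yL s E v 1)) (rowRate vL yL s E v 2)

variable {vL yL s E x v y : ℝ}

lemma charQuad_eq_mul (hvL : 0 < vL) (hL : 4 * vL ≤ yL ^ 2) (x : ℝ) :
    charQuad vL yL x = vL * (x - vL * lam1 vL yL) * (x - vL * lam2 vL yL) := by
  have hD := Real.sq_sqrt (sub_nonneg.2 hL)
  unfold charQuad lam1 lam2
  generalize Real.sqrt (yL ^ 2 - 4 * vL) = D at hD ⊢
  field_simp
  linear_combination hD

lemma lam1_le_lam2 (v y : ℝ) : lam1 v y ≤ lam2 v y := by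
  unfold lam1 lam2
  gcongr
  linarith [Real.sqrt_nonneg (y ^ 2 - 4 * v)]

lemma charQuad_neg_of_between_roots (hvL : 0 < vL) (hL : 4 * vL ≤ yL ^ 2)
    (h₁ : vL * lam1 vL yL < x) (h₂ : x < vL * lam2 vL yL) : charQuad vL yL x < 0 := by
  rw [charQuad_eq_mul hvL hL]
  exact mul_neg_of_pos_of_neg (mul_pos hvL (sub_pos.2 h₁)) (sub_neg.2 h₂)

lemma charQuad_pos_of_lt_root (hvL : 0 < vL) (hL : 4 * vL ≤ yL ^ 2) (h : x < vL * lam1 vL yL) :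
    0 < charQuad vL yL x := by
  have h₂ : x < vL * lam2 vL yL := h.trans_le (by gcongr; exact lam1_le_lam2 vL yL)
  rw [charQuad_eq_mul hvL hL]
  exact mul_pos_of_neg_of_neg (mul_neg_of_pos_of_neg hvL (sub_neg.2 h)) (sub_neg.2 h₂)

/-- The roots `vL λ₁`, `vL λ₂` of `charQuad` have product `1 / vL`. -/
lemma mul_mul_lt_one_of_lt_roots (hvL : 0 < vL) (hL : 4 * vL ≤ yL ^ 2) (hx : 0 < x) (hy : 0 < y)
    (hx₁ : x < vL * lam1 vL yL) (hy₂ : y < vL * lam2 vL yL) : vL * x * y < 1 := by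
  have hprod := charQuad_eq_mul hvL hL 0
  simp only [charQuad] at hprod
  have : x * y < vL * lam1 vL yL * (vL * lam2 vL yL) := mul_lt_mul'' hx₁ hy₂ hx.le hy.le
  nlinarith

lemma barriers_nonneg_of_mem_region (hv : 0 < v) (hs : 0 < s) (hE : 0 ≤ E)
    (hEs : vL * (s * vL) * E ≤ 1) (hvv : v ≤ vL)
    (hR : (y - φ₁ vL yL E v) * (y - φ₂ vL yL s v) ≤ 0) (i : Fin 3) :
    0 ≤ barriers vL yL s E v y i := by
  have hvL : 0 < vL := hv.trans_le hvv
  -- between `0` and `vL` the curve `φ₂` lies above the line `φ₁`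
  have hgap : φ₂ vL yL s v - φ₁ vL yL E v = (vL - v) * (1 / (s * v * vL) - E) := by
    unfold φ₁ φ₂; field_simp; ring
  have hslope : 0 ≤ 1 / (s * v * vL) - E := by
    rw [sub_nonneg, le_div_iff₀ (by positivity)]
    nlinarith [mul_le_mul_of_nonneg_left hvv (by positivity : 0 ≤ E * s * vL)]
  have hsum : 0 ≤ (y - φ₁ vL yL E v) + (φ₂ vL yL s v - y) := by
    linarith [mul_nonneg (sub_nonneg.2 hvv) hslope]
  have hsides : 0 ≤ (y - φ₁ vL yL E v) ∧ 0 ≤ (φ₂ vL yL s v - y) := by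
    rcases nonneg_and_nonneg_or_nonpos_and_nonpos_of_mul_nonneg
      (by linarith : 0 ≤ (y - φ₁ vL yL E v) * (φ₂ vL yL s v - y)) with h | h
    · exact h
    · constructor <;> linarith [h.1, h.2]
  match i with
  | 0 => exact sub_nonneg.2 hvv
  | 1 => exact hsides.1
  | 2 => exact hsides.2

lemma mem_region_of_barriers_nonneg (h : ∀ i, 0 ≤ barriers vL yL s E v y i) :
    v ≤ vL ∧ (y - φ₁ vL yL E v) * (y - φ₂ vL yL s v) ≤ 0 := by
  have h₀ := h 0
  have h₁ := h 1
  have h₂ := h 2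
  simp only [barriers, Matrix.cons_val_zero, Matrix.cons_val_one, Matrix.cons_val_two,
    Matrix.tail_cons, Matrix.head_cons] at h₀ h₁ h₂
  exact ⟨sub_nonneg.1 h₀, by nlinarith⟩

lemma barriersDeriv_zero_le (hv : 0 < v) (hvL : 0 < vL)
    (hmin : barriers vL yL s E v y 0 ≤ barriers vL yL s E v y 1) :
    barriersDeriv s E v (fieldV vL yL s v y) (fieldY vL yL s v y) 0 ≤
      rowRate vL yL s E v 0 * -barriers vL yL s E v y 0 := by
  simp only [barriers, barriersDeriv, rowRate, Matrix.cons_val_zero, Matrix.cons_val_one]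
    at hmin ⊢
  calc -fieldV vL yL s v y
      = -((y - φ₁ vL yL E v) / v) - (vL - v) * ((E * vL + yL) / (vL * v) + s) := by
        unfold fieldV φ₁; field_simp; ring
    _ ≤ -((vL - v) / v) - (vL - v) * ((E * vL + yL) / (vL * v) + s) := by gcongr
    _ = _ := by ring

lemma barriersDeriv_one_le (hv : 0 < v) (hvL : 0 < vL) (hPE : charQuad vL yL E ≤ 0)
    (hmin : barriers vL yL s E v y 1 ≤ barriers vL yL s E v y 0) :
    barriersDeriv s E v (fieldV vL yL s v y) (fieldY vL yL s v y) 1 ≤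
      rowRate vL yL s E v 1 * -barriers vL yL s E v y 1 := by
  simp only [barriers, barriersDeriv, rowRate, Matrix.cons_val_zero, Matrix.cons_val_one]
    at hmin ⊢
  have hκ : charQuad vL yL E / (v * vL) ≤ 0 := div_nonpos_of_nonpos_of_nonneg hPE (by positivity)
  calc fieldY vL yL s v y + E * fieldV vL yL s v y
      = charQuad vL yL E / (v * vL) * (vL - v) + (E / v - s) * (y - φ₁ vL yL E v) := by
        unfold fieldV fieldY φ₁ charQuad; field_simp; ring
    _ ≤ charQuad vL yL E / (v * vL) * (y - φ₁ vL yL E v) +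
          (E / v - s) * (y - φ₁ vL yL E v) := by
        gcongr ?_ + _
        exact mul_le_mul_of_nonpos_left hmin hκ
    _ = _ := by ring

lemma barriersDeriv_two_le (hv : 0 < v) (hvL : 0 < vL) (hs : 0 < s)
    (hPs : v ≤ vL → 0 ≤ charQuad vL yL (s * v)) (hneg : barriers vL yL s E v y 2 ≤ 0)
    (hmin : barriers vL yL s E v y 2 ≤ barriers vL yL s E v y 0) :
    barriersDeriv s E v (fieldV vL yL s v y) (fieldY vL yL s v y) 2 ≤
      rowRate vL yL s E v 2 * -barriers vL yL s E v y 2 := by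
  simp only [barriers, barriersDeriv, rowRate, Matrix.cons_val_zero, Matrix.cons_val_two,
    Matrix.tail_cons, Matrix.head_cons] at hneg hmin ⊢
  set Q := charQuad vL yL (s * v) / (s ^ 2 * v ^ 4 * vL)
  -- `Q` may be negative only where `v > vL`, i.e. where the first barrier is negative
  have hQ : -(Q * (vL - v)) ≤ |Q| * -(φ₂ vL yL s v - y) := by
    rcases le_or_gt 0 (vL - v) with hA | hA
    · have : 0 ≤ Q := div_nonneg (hPs (by linarith)) (by positivity)
      nlinarith [abs_nonneg Q]
    · calc -(Q * (vL - v)) ≤ |Q| * |vL - v| := by rw [← abs_mul]; exact neg_le_abs _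
        _ ≤ |Q| * -(φ₂ vL yL s v - y) := by rw [abs_of_neg hA]; gcongr
  calc -(fieldV vL yL s v y / (s * v ^ 2)) - fieldY vL yL s v y
      = -(Q * (vL - v)) + (s - 1 / (s * v ^ 3)) * -(φ₂ vL yL s v - y) := by
        unfold Q fieldV fieldY φ₂ charQuad; field_simp; ring
    _ ≤ _ := by linarith

lemma rowRate_le_rate (i : Fin 3) : rowRate vL yL s E v i ≤ rate vL yL s E v := by
  unfold rate
  fin_cases i <;> simp

lemma barriersDeriv_le_rate (hv : 0 < v) (hvL : 0 < vL) (hs : 0 < s)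
    (hPE : charQuad vL yL E ≤ 0) (hPs : v ≤ vL → 0 ≤ charQuad vL yL (s * v)) (i : Fin 3)
    (hneg : barriers vL yL s E v y i < 0)
    (hmin : ∀ j, barriers vL yL s E v y i ≤ barriers vL yL s E v y j) :
    barriersDeriv s E v (fieldV vL yL s v y) (fieldY vL yL s v y) i ≤
      rate vL yL s E v * -barriers vL yL s E v y i := by
  refine le_trans ?_ (mul_le_mul_of_nonneg_right (rowRate_le_rate i) (by linarith))
  fin_cases i
  · exact barriersDeriv_zero_le hv hvL (hmin 1)
  · exact barriersDeriv_one_le hv hvL hPE (hmin 0)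
  · exact barriersDeriv_two_le hv hvL hs hPs hneg.le (hmin 0)

lemma continuousOn_rate (hvL : 0 < vL) (hs : 0 < s) :
    ContinuousOn (rate vL yL s E) (Ioi 0) := by
  intro v hv
  have hv : 0 < v := hv
  unfold rate rowRate charQuad
  simp only [Matrix.cons_val_zero, Matrix.cons_val_one, Matrix.cons_val_two, Matrix.tail_cons,
    Matrix.head_cons]
  exact ContinuousAt.continuousWithinAt (by fun_prop (disch := positivity))

lemma hasDerivAt_barriers {V Y : ℝ → ℝ} {v' y' t : ℝ} (hV : HasDerivAt V v' t)
    (hY : HasDerivAt Y y' t) (hVt : V t ≠ 0) (i : Fin 3) :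
    HasDerivAt (fun u => barriers vL yL s E (V u) (Y u) i)
      (barriersDeriv s E (V t) v' y' i) t := by
  match i with
  | 0 => simpa [barriers, barriersDeriv] using hV.const_sub vL
  | 1 =>
    simp only [barriers, barriersDeriv, φ₁, Matrix.cons_val_one, Matrix.cons_val_zero]
    exact (hY.sub (((hV.sub_const vL).const_mul E).const_sub yL)).congr_deriv (by ring)
  | 2 =>
    simp only [barriers, barriersDeriv, φ₂, Matrix.cons_val_two, Matrix.tail_cons,
      Matrix.head_cons]
    have hinv := (hasDerivAt_const t (1 : ℝ)).fun_div hV hVt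
    refine ((((hinv.sub_const (1 / vL)).const_mul (1 / s)).add_const yL).sub hY).congr_deriv ?_
    field_simp
    ring

theorem barriers_nonneg_of_solution (hvL : 0 < vL) (hs : 0 < s) (hPE : charQuad vL yL E ≤ 0)
    (hPs : ∀ v, 0 < v → v ≤ vL → 0 ≤ charQuad vL yL (s * v))
    {t₀ t₁ : ℝ} {V Y : ℝ → ℝ}
    (hV : ∀ t ∈ Icc t₀ t₁, 0 < V t)
    (hV' : ∀ t ∈ Icc t₀ t₁, HasDerivAt V (fieldV vL yL s (V t) (Y t)) t)
    (hY' : ∀ t ∈ Icc t₀ t₁, HasDerivAt Y (fieldY vL yL s (V t) (Y t)) t)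
    (h₁ : ∀ i, 0 ≤ barriers vL yL s E (V t₁) (Y t₁) i) :
    ∀ t ∈ Icc t₀ t₁, ∀ i, 0 ≤ barriers vL yL s E (V t) (Y t) i := by
  have hderiv : ∀ i, ∀ t ∈ Icc t₀ t₁,
      HasDerivAt (fun u => barriers vL yL s E (V u) (Y u) i)
        (barriersDeriv s E (V t) (fieldV vL yL s (V t) (Y t)) (fieldY vL yL s (V t) (Y t)) i) t :=
    fun i t ht => hasDerivAt_barriers (hV' t ht) (hY' t ht) (hV t ht).ne' i
  have hVc : ContinuousOn V (Icc t₀ t₁) := fun t ht =>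
    (hV' t ht).continuousAt.continuousWithinAt
  obtain ⟨M, hM⟩ := isCompact_Icc.bddAbove_image ((continuousOn_rate hvL hs).comp hVc hV)
  refine forall_nonneg_of_deriv_right_le_boundary M
    (fun i t ht => (hderiv i t ht).continuousAt.continuousWithinAt)
    (fun i t ht => (hderiv i t (Ico_subset_Icc_self ht)).hasDerivWithinAt)
    (fun t ht i hneg hmin => ?_) h₁
  replace ht := Ico_subset_Icc_self ht
  exact (barriersDeriv_le_rate (hV t ht) hvL hs hPE (hPs _ (hV t ht)) i hneg hmin).trans
    (mul_le_mul_of_nonneg_right (hM ⟨t, ht, rfl⟩) (by linarith))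

end LayerODE

end

open LayerODE

theorem stmt17_general (vL yL s E w1 w2 : ℝ)
    (hvL : 0 < vL) (hL : yL ^ 2 > 4 * vL)
    (hs0 : 0 < s) (hs1 : s < lam1 vL yL)
    (hw1 : w1 = yL / vL - s * vL) (hw2 : w2 = 1 / vL - s * yL)
    (hE1 : vL * lam1 vL yL < E) (hE2 : E < vL * lam2 vL yL) :
    ∀ (t0 t1 : ℝ) (V Y : ℝ → ℝ),
      (∀ t ∈ Set.Icc t0 t1, 0 < V t) →
      (∀ t ∈ Set.Icc t0 t1, HasDerivAt V (Y t / V t - s * V t - w1) t) →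
      (∀ t ∈ Set.Icc t0 t1, HasDerivAt Y (1 / V t - s * Y t - w2) t) →
      (V t1 ≤ vL ∧
        (Y t1 - (yL - E * (V t1 - vL))) *
          (Y t1 - ((1 / s) * (1 / V t1 - 1 / vL) + yL)) ≤ 0) →
      ∀ t ∈ Set.Icc t0 t1,
        V t ≤ vL ∧
        (Y t - (yL - E * (V t - vL))) *
          (Y t - ((1 / s) * (1 / V t - 1 / vL) + yL)) ≤ 0 := by
  intro t0 t1 V Y hV hV' hY' h₁ t ht
  subst hw1 hw2
  have hsvL : s * vL < vL * lam1 vL yL := by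
    rw [mul_comm]; exact mul_lt_mul_of_pos_left hs1 hvL
  have hsvL₀ : 0 < s * vL := mul_pos hs0 hvL
  have hE : 0 < E := hsvL₀.trans (hsvL.trans hE1)
  have hPs : ∀ v, 0 < v → v ≤ vL → 0 ≤ charQuad vL yL (s * v) := fun v _ hvv =>
    (charQuad_pos_of_lt_root hvL hL.le
      ((mul_le_mul_of_nonneg_left hvv hs0.le).trans_lt hsvL)).le
  have h₁' : ∀ i, 0 ≤ barriers vL yL s E (V t1) (Y t1) i :=
    barriers_nonneg_of_mem_region (hV t1 ⟨ht.1.trans ht.2, le_rfl⟩) hs0 hE.le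
      (mul_mul_lt_one_of_lt_roots hvL hL.le hsvL₀ hE hsvL hE2).le h₁.1 h₁.2
  exact mem_region_of_barriers_nonneg <| barriers_nonneg_of_solution hvL hs0
    (charQuad_neg_of_between_roots hvL hL.le hE1 hE2).le hPs hV hV' hY' h₁' t ht

theorem stmt17 (vL yL s E w1 w2 : ℝ)
    (hvL : 0 < vL) (hyL : yL < 0) (hL : yL ^ 2 > 4 * vL)
    (hs0 : 0 < s) (hs1 : s < lam1 vL yL)
    (hw1 : w1 = yL / vL - s * vL) (hw2 : w2 = 1 / vL - s * yL)
    (hE1 : vL * lam1 vL yL < E) (hE2 : E < vL * lam2 vL yL) :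
    ∀ (t0 t1 : ℝ) (V Y : ℝ → ℝ),
      (∀ t ∈ Set.Icc t0 t1, 0 < V t) →
      (∀ t ∈ Set.Icc t0 t1, HasDerivAt V (Y t / V t - s * V t - w1) t) →
      (∀ t ∈ Set.Icc t0 t1, HasDerivAt Y (1 / V t - s * Y t - w2) t) →
      (V t1 ≤ vL ∧
        (Y t1 - (yL - E * (V t1 - vL))) *
          (Y t1 - ((1 / s) * (1 / V t1 - 1 / vL) + yL)) ≤ 0) →
      ∀ t ∈ Set.Icc t0 t1,
        V t ≤ vL ∧
        (Y t - (yL - E * (V t - vL))) *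
          (Y t - ((1 / s) * (1 / V t - 1 / vL) + yL)) ≤ 0 :=
  stmt17_general vL yL s E w1 w2 hvL hL hs0 hs1 hw1 hw2 hE1 hE2
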